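/- Each of the functions f(τ) = τ − (τ+12)tanh(τ/3) − e^{τ/3}(τ + (τ−12)tanh(τ/3)) and g(τ) = τ − (τ+12)tanh(τ/3) + e^{τ/3}(τ + (τ−12)tanh(τ/3)) has exactly one strictly positive root, and the positive root of f is strictly smaller than the positive root of g. -/

import Mathlib

open Real

noncomputable def fFun (τ : ℝ) : ℝ :=
  τ - (τ + 12) * Real.tanh (τ / 3) - Real.exp (τ / 3) * (τ + (τ - 12) * Real.tanh (τ / 3))

noncomputable def gFun (τ : ℝ) : ℝ :=
  τ - (τ + 12) * Real.tanh (τ / 3) + Real.exp (τ / 3) * (τ + (τ - 12) * Real.tanh (τ / 3))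

section Aux

/-- sign pattern: negative on (0,z), zero at z, positive after -/
def Pat (h : ℝ → ℝ) (z : ℝ) : Prop :=
  0 < z ∧ h z = 0 ∧ (∀ x, 0 < x → x < z → h x < 0) ∧ (∀ x, z < x → 0 < h x)

lemma Pat.unique {h : ℝ → ℝ} {z x : ℝ} (hp : Pat h z) (hx : 0 < x) (hr : h x = 0) :
    x = z := by
  rcases lt_trichotomy x z with h1 | h1 | h1
  · exact absurd hr (hp.2.2.1 x hx h1).ne
  · exact h1
  · exact absurd hr (hp.2.2.2 x h1).ne'

lemma pat_of_mono {h h' : ℝ → ℝ} {b : ℝ}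
    (hd : ∀ x, HasDerivAt h (h' x) x)
    (hpos : ∀ x, 0 < x → 0 < h' x)
    (h0 : h 0 < 0) (hb0 : 0 < b) (hb : 0 < h b) :
    ∃ z, z < b ∧ Pat h z := by
  have hdiff : Differentiable ℝ h := fun x => (hd x).differentiableAt
  have hmono : StrictMonoOn h (Set.Ici (0:ℝ)) := by
    apply strictMonoOn_of_deriv_pos (convex_Ici 0) hdiff.continuous.continuousOn
    intro x hx
    rw [interior_Ici] at hx
    rw [(hd x).deriv]
    exact hpos x hx
  have hcont : ContinuousOn h (Set.Icc 0 b) := hdiff.continuous.continuousOn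
  have := intermediate_value_Icc hb0.le hcont
  have hmem : (0:ℝ) ∈ Set.Icc (h 0) (h b) := ⟨h0.le, hb.le⟩
  obtain ⟨z, hz, hz0⟩ := this hmem
  have hzpos : 0 < z := by
    rcases hz.1.lt_or_eq with h1 | h1
    · exact h1
    · rw [← h1] at hz0; exact absurd hz0 h0.ne
  refine ⟨z, ?_, hzpos, hz0, ?_, ?_⟩
  · rcases hz.2.lt_or_eq with h1 | h1
    · exact h1
    · rw [h1] at hz0; exact absurd hz0 hb.ne'
  · intro x hx hxz
    have := hmono (Set.mem_Ici.2 hx.le) (Set.mem_Ici.2 hzpos.le) hxz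
    linarith [hz0 ▸ this]
  · intro x hxz
    have := hmono (Set.mem_Ici.2 hzpos.le) (Set.mem_Ici.2 (hzpos.trans hxz).le) hxz
    linarith [hz0 ▸ this]

lemma pat_step {h h' : ℝ → ℝ} {c b : ℝ}
    (hd : ∀ x, HasDerivAt h (h' x) x)
    (hp : Pat h' c)
    (h0 : h 0 ≤ 0) (hcb : c < b) (hb : 0 < h b) :
    ∃ z, z < b ∧ Pat h z := by
  obtain ⟨hc0, hc, hneg, hpos⟩ := hp
  have hdiff : Differentiable ℝ h := fun x => (hd x).differentiableAt
  have hanti : StrictAntiOn h (Set.Icc 0 c) := by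
    apply strictAntiOn_of_deriv_neg (convex_Icc 0 c) hdiff.continuous.continuousOn
    intro x hx
    rw [interior_Icc] at hx
    rw [(hd x).deriv]
    exact hneg x hx.1 hx.2
  have hmono : StrictMonoOn h (Set.Ici c) := by
    apply strictMonoOn_of_deriv_pos (convex_Ici c) hdiff.continuous.continuousOn
    intro x hx
    rw [interior_Ici] at hx
    rw [(hd x).deriv]
    exact hpos x hx
  have hhc : h c < 0 := by
    have := hanti (Set.mem_Icc.2 ⟨le_refl 0, hc0.le⟩) (Set.mem_Icc.2 ⟨hc0.le, le_refl c⟩) hc0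
    linarith
  have hcont : ContinuousOn h (Set.Icc c b) := hdiff.continuous.continuousOn
  obtain ⟨z, hz, hz0⟩ := intermediate_value_Icc hcb.le hcont ⟨hhc.le, hb.le⟩
  have hzc : c < z := by
    rcases hz.1.lt_or_eq with h1 | h1
    · exact h1
    · rw [← h1] at hz0; exact absurd hz0 hhc.ne
  have hzb : z < b := by
    rcases hz.2.lt_or_eq with h1 | h1
    · exact h1
    · rw [h1] at hz0; exact absurd hz0 hb.ne'
  refine ⟨z, hzb, hc0.trans hzc, hz0, ?_, ?_⟩
  · intro x hx hxz
    rcases le_or_gt x c with h1 | h1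
    · have := hanti (Set.mem_Icc.2 ⟨le_refl 0, hc0.le⟩) (Set.mem_Icc.2 ⟨hx.le, h1⟩) hx
      linarith
    · have := hmono (Set.mem_Ici.2 h1.le) (Set.mem_Ici.2 hzc.le) hxz
      linarith [hz0 ▸ this]
  · intro x hxz
    have := hmono (Set.mem_Ici.2 hzc.le) (Set.mem_Ici.2 (hzc.trans hxz).le) hxz
    linarith [hz0 ▸ this]

lemma pat_mul {k h : ℝ → ℝ} {z : ℝ} (hk : ∀ x, 0 < k x) (hp : Pat h z) :
    Pat (fun x => k x * h x) z := by
  obtain ⟨hz, h0, hn, hps⟩ := hp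
  exact ⟨hz, by simp [h0], fun x hx hxz => mul_neg_of_pos_of_neg (hk x) (hn x hx hxz),
    fun x hxz => mul_pos (hk x) (hps x hxz)⟩

noncomputable def P0f (x : ℝ) : ℝ := ((exp x)^2 + exp x + 1) * x - 2*(exp x)^2 + 2
noncomputable def P1f (x : ℝ) : ℝ := (2*(exp x)^2 + exp x) * x - 3*(exp x)^2 + exp x + 1
noncomputable def Rf (x : ℝ) : ℝ := (4*exp x + 1)*x - 4*exp x + 2
noncomputable def S0f (x : ℝ) : ℝ := ((exp x)^2 - exp x + 1) * x - 2*(exp x)^2 + 2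
noncomputable def S1f (x : ℝ) : ℝ := (2*(exp x)^2 - exp x) * x - 3*(exp x)^2 - exp x + 1
noncomputable def R2f (x : ℝ) : ℝ := (4*exp x - 1)*x - 4*exp x - 2
noncomputable def R3f (x : ℝ) : ℝ := 4*x*exp x - 1

lemma hdR3 (x : ℝ) : HasDerivAt R3f (4*exp x*(x+1)) x := by
  have h : HasDerivAt (fun x : ℝ => 4*x*exp x - 1) (4*exp x*(x+1)) x := by
    have := ((hasDerivAt_id x).const_mul 4).mul (Real.hasDerivAt_exp x)
    refine (this.sub_const 1).congr_deriv ?_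
    (try simp only [id_eq]); ring
  exact h

lemma hdR2 (x : ℝ) : HasDerivAt R2f (R3f x) x := by
  unfold R2f R3f
  have h1 : HasDerivAt (fun x : ℝ => (4*exp x - 1)*x) ((4*exp x)*x + (4*exp x - 1)) x := by
    have := (((Real.hasDerivAt_exp x).const_mul 4).sub_const 1).mul (hasDerivAt_id x)
    refine this.congr_deriv ?_; (try simp only [id_eq]); ring
  have h2 := (Real.hasDerivAt_exp x).const_mul 4
  refine ((h1.sub h2).sub_const 2).congr_deriv ?_; ring

lemma hdR (x : ℝ) : HasDerivAt Rf (R3f x + 2) x := by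
  unfold Rf R3f
  have h1 : HasDerivAt (fun x : ℝ => (4*exp x + 1)*x) ((4*exp x)*x + (4*exp x + 1)) x := by
    have := (((Real.hasDerivAt_exp x).const_mul 4).add_const 1).mul (hasDerivAt_id x)
    refine this.congr_deriv ?_; (try simp only [id_eq]); ring
  have h2 := (Real.hasDerivAt_exp x).const_mul 4
  refine ((h1.sub h2).add_const 2).congr_deriv ?_; ring

lemma hdexp2 (x : ℝ) : HasDerivAt (fun x : ℝ => (exp x)^2) (2*(exp x)^2) x := by
  have := (Real.hasDerivAt_exp x).pow 2
  refine this.congr_deriv ?_; ring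

lemma hdP1 (x : ℝ) : HasDerivAt P1f (exp x * Rf x) x := by
  unfold P1f Rf
  have h1 : HasDerivAt (fun x : ℝ => (2*(exp x)^2 + exp x)*x)
      ((2*(2*(exp x)^2) + exp x)*x + (2*(exp x)^2 + exp x)) x := by
    have := (((hdexp2 x).const_mul 2).add (Real.hasDerivAt_exp x)).mul (hasDerivAt_id x)
    refine this.congr_deriv ?_; simp only [id_eq, Pi.add_apply, Pi.sub_apply]; ring
  have h2 := (hdexp2 x).const_mul 3
  have h3 := Real.hasDerivAt_exp x
  have := ((h1.sub h2).add h3).add_const 1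
  refine this.congr_deriv ?_; ring

lemma hdP0 (x : ℝ) : HasDerivAt P0f (P1f x) x := by
  unfold P0f P1f
  have h1 : HasDerivAt (fun x : ℝ => ((exp x)^2 + exp x + 1)*x)
      ((2*(exp x)^2 + exp x)*x + ((exp x)^2 + exp x + 1)) x := by
    have := (((hdexp2 x).add (Real.hasDerivAt_exp x)).add_const 1).mul (hasDerivAt_id x)
    refine this.congr_deriv ?_; simp only [id_eq, Pi.add_apply, Pi.sub_apply]; ring
  have h2 := (hdexp2 x).const_mul 2
  have := (h1.sub h2).add_const 2
  refine this.congr_deriv ?_; ring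

lemma hdS1 (x : ℝ) : HasDerivAt S1f (exp x * R2f x) x := by
  unfold S1f R2f
  have h1 : HasDerivAt (fun x : ℝ => (2*(exp x)^2 - exp x)*x)
      ((2*(2*(exp x)^2) - exp x)*x + (2*(exp x)^2 - exp x)) x := by
    have := (((hdexp2 x).const_mul 2).sub (Real.hasDerivAt_exp x)).mul (hasDerivAt_id x)
    refine this.congr_deriv ?_; simp only [id_eq, Pi.add_apply, Pi.sub_apply]; ring
  have h2 := (hdexp2 x).const_mul 3
  have h3 := Real.hasDerivAt_exp x
  have := ((h1.sub h2).sub h3).add_const 1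
  refine this.congr_deriv ?_; ring

lemma hdS0 (x : ℝ) : HasDerivAt S0f (S1f x) x := by
  unfold S0f S1f
  have h1 : HasDerivAt (fun x : ℝ => ((exp x)^2 - exp x + 1)*x)
      ((2*(exp x)^2 - exp x)*x + ((exp x)^2 - exp x + 1)) x := by
    have := (((hdexp2 x).sub (Real.hasDerivAt_exp x)).add_const 1).mul (hasDerivAt_id x)
    refine this.congr_deriv ?_; simp only [id_eq, Pi.add_apply, Pi.sub_apply]; ring
  have h2 := (hdexp2 x).const_mul 2
  have := (h1.sub h2).add_const 2
  refine this.congr_deriv ?_; ring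

lemma patP0 : ∃ z, Pat P0f z := by
  -- level 3 : Rf, monotone with derivative R3f + 2 = 4 x e^x + 1
  obtain ⟨z3, hz31, hpR⟩ : ∃ z, z < 1 ∧ Pat Rf z := by
    apply pat_of_mono hdR
    · intro x hx
      unfold R3f
      nlinarith [exp_pos x]
    · unfold Rf; norm_num [Real.exp_zero]
    · norm_num
    · unfold Rf; ring_nf; positivity
  -- level 2 : P1f
  obtain ⟨z2, hz22, hpP1⟩ : ∃ z, z < 2 ∧ Pat P1f z := by
    apply pat_step hdP1 (pat_mul (fun x => exp_pos x) hpR)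
    · unfold P1f; norm_num [Real.exp_zero]
    · linarith
    · unfold P1f; nlinarith [exp_pos 2]
  -- level 1 : P0f
  obtain ⟨z1, _, hpP0⟩ : ∃ z, z < 3 ∧ Pat P0f z := by
    apply pat_step hdP0 hpP1
    · unfold P0f; simp
    · linarith
    · unfold P0f; nlinarith [exp_pos 3]
  exact ⟨z1, hpP0⟩

lemma patS0 : ∃ z, Pat S0f z := by
  -- level 4 : R3f, monotone
  obtain ⟨w4, hw41, hpR3⟩ : ∃ z, z < 1 ∧ Pat R3f z := by
    apply pat_of_mono hdR3
    · intro x hx; positivity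
    · unfold R3f; norm_num [Real.exp_zero]
    · norm_num
    · unfold R3f; nlinarith [add_one_le_exp (1:ℝ)]
  -- level 3 : R2f
  obtain ⟨w3, hw32, hpR2⟩ : ∃ z, z < 2 ∧ Pat R2f z := by
    apply pat_step hdR2 hpR3
    · unfold R2f; norm_num [Real.exp_zero]
    · linarith
    · unfold R2f; nlinarith [add_one_le_exp (2:ℝ)]
  -- level 2 : S1f
  obtain ⟨w2, hw23, hpS1⟩ : ∃ z, z < 3 ∧ Pat S1f z := by
    apply pat_step hdS1 (pat_mul (fun x => exp_pos x) hpR2)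
    · unfold S1f; norm_num [Real.exp_zero]
    · linarith
    · unfold S1f; nlinarith [add_one_le_exp (3:ℝ)]
  -- level 1 : S0f
  obtain ⟨w1, _, hpS0⟩ : ∃ z, z < 4 ∧ Pat S0f z := by
    apply pat_step hdS0 hpS1
    · unfold S0f; simp
    · linarith
    · unfold S0f; nlinarith [add_one_le_exp (4:ℝ)]
  exact ⟨w1, hpS0⟩

lemma f_id (τ : ℝ) :
    fFun τ * ((exp (τ/3))^2 + 1) = -6 * (exp (τ/3) - 1) * P0f (τ/3) := by
  have hu : exp (τ/3) ≠ 0 := exp_ne_zero _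
  rw [fFun, P0f, Real.tanh_eq_sinh_div_cosh, Real.sinh_eq, Real.cosh_eq, Real.exp_neg]
  have hc : exp (τ/3) + (exp (τ/3))⁻¹ ≠ 0 := by positivity
  field_simp
  ring

lemma g_id (τ : ℝ) :
    gFun τ * ((exp (τ/3))^2 + 1) = 6 * (exp (τ/3) + 1) * S0f (τ/3) := by
  have hu : exp (τ/3) ≠ 0 := exp_ne_zero _
  rw [gFun, S0f, Real.tanh_eq_sinh_div_cosh, Real.sinh_eq, Real.cosh_eq, Real.exp_neg]
  have hc : exp (τ/3) + (exp (τ/3))⁻¹ ≠ 0 := by positivity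
  field_simp
  ring

lemma f_iff {τ : ℝ} (hτ : 0 < τ) : fFun τ = 0 ↔ P0f (τ/3) = 0 := by
  have h1 : (1:ℝ) < exp (τ/3) := by
    rw [show (1:ℝ) = exp 0 by simp]
    exact exp_lt_exp.2 (by linarith)
  have hne : ((exp (τ/3))^2 + 1) ≠ 0 := by positivity
  have hid := f_id τ
  constructor
  · intro h
    rw [h, zero_mul] at hid
    rcases mul_eq_zero.1 hid.symm with h' | h'
    · exfalso; nlinarith
    · exact h'
  · intro h
    rw [h, mul_zero] at hid
    exact (mul_eq_zero.1 hid).resolve_right hne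

lemma g_iff {τ : ℝ} (hτ : 0 < τ) : gFun τ = 0 ↔ S0f (τ/3) = 0 := by
  have h1 : (0:ℝ) < exp (τ/3) := exp_pos _
  have hne : ((exp (τ/3))^2 + 1) ≠ 0 := by positivity
  have hid := g_id τ
  constructor
  · intro h
    rw [h, zero_mul] at hid
    rcases mul_eq_zero.1 hid.symm with h' | h'
    · exfalso; nlinarith
    · exact h'
  · intro h
    rw [h, mul_zero] at hid
    exact (mul_eq_zero.1 hid).resolve_right hne

lemma PS_diff (x : ℝ) : P0f x - S0f x = 2*x*exp x := by
  unfold P0f S0f; ring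

end Aux

/-- Each of `f` and `g` has exactly one strictly positive root, and the positive
root of `f` is strictly smaller than the positive root of `g`. -/
theorem stmt2 :
    ∃ τf τg : ℝ, 0 < τf ∧ 0 < τg ∧ fFun τf = 0 ∧ gFun τg = 0 ∧
      (∀ τ : ℝ, 0 < τ → fFun τ = 0 → τ = τf) ∧
      (∀ τ : ℝ, 0 < τ → gFun τ = 0 → τ = τg) ∧
      τf < τg := by
  obtain ⟨zf, hpf⟩ := patP0
  obtain ⟨zg, hpg⟩ := patS0
  have hzf : 0 < zf := hpf.1
  have hzg : 0 < zg := hpg.1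
  have hfg : zf < zg := by
    have hS : S0f zf < 0 := by
      have := PS_diff zf
      have h2 : 0 < 2*zf*exp zf := by positivity
      rw [hpf.2.1] at this
      linarith
    rcases lt_trichotomy zf zg with h | h | h
    · exact h
    · rw [h] at hS; rw [hpg.2.1] at hS; exact absurd hS (lt_irrefl _)
    · exact absurd (hpg.2.2.2 zf h) hS.asymm
  refine ⟨3*zf, 3*zg, by linarith, by linarith, ?_, ?_, ?_, ?_, by linarith⟩
  · rw [f_iff (by linarith)]
    have : 3*zf/3 = zf := by ring
    rw [this]; exact hpf.2.1
  · rw [g_iff (by linarith)]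
    have : 3*zg/3 = zg := by ring
    rw [this]; exact hpg.2.1
  · intro τ hτ hr
    rw [f_iff hτ] at hr
    have := hpf.unique (by linarith : 0 < τ/3) hr
    linarith
  · intro τ hτ hr
    rw [g_iff hτ] at hr
    have := hpg.unique (by linarith : 0 < τ/3) hr
    linarith
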